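/- arXiv:1602.01903 — 2 statements merged into one kernel-verified Lean document; each statement's English description precedes it below -/
import Mathlib

section
/- For all natural numbers n, M₀(n+1) = M₀(n) + M₀(n), i.e. passing from exponent n to n+1 in the k = 0 column of Moessner's sieve doubles the value. -/
def f : ℕ → ℕ → ℕ
  | 0, x => x + 1
  | m + 1, x => ∑ a ∈ Finset.range (x + 1), f m a

def B (n : ℕ) : ℕ := ∑ m ∈ Finset.range (n + 1), ∑ x ∈ Finset.range (n + 1 - m), f m x

def M₀ (n : ℕ) : ℕ := (n + 3) + B n

lemma hockey (r : ℕ) : ∀ t, ∑ a ∈ Finset.range t, (a + r).choose r = (t + r).choose (r + 1)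
  | 0 => by simp [Nat.choose_eq_zero_of_lt]
  | t + 1 => by
    rw [Finset.sum_range_succ, hockey r t]
    have : t + 1 + r = (t + r) + 1 := by ring
    rw [this, Nat.choose_succ_succ, Nat.add_comm]

lemma f_eq (m : ℕ) : ∀ x, f m x = (x + m + 1).choose (m + 1) := by
  induction m with
  | zero => intro x; simp [f]
  | succ m ih =>
    intro x
    simp only [f, ih]
    have := hockey (m + 1) (x + 1)
    simp only [show ∀ a : ℕ, a + m + 1 = a + (m + 1) by omega] at *
    rw [this]
    congr 1
    omega

lemma M₀_eq (n : ℕ) : M₀ n = 2 ^ (n + 2) := by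
  have hB : B n = ∑ m ∈ Finset.range (n + 1), (n + 2).choose (m + 2) := by
    apply Finset.sum_congr rfl
    intro m hm
    simp only [Finset.mem_range] at hm
    have h1 : ∀ x, f m x = (x + (m + 1)).choose (m + 1) := by
      intro x; rw [f_eq, Nat.add_assoc]
    simp only [h1, hockey (m + 1) (n + 1 - m)]
    congr 1
    omega
  have h2 : ∑ i ∈ Finset.range (n + 3), (n + 2).choose i = 2 ^ (n + 2) := by
    exact Nat.sum_range_choose (n + 2)
  rw [Finset.sum_range_succ'] at h2
  rw [Finset.sum_range_succ'] at h2
  norm_num [Nat.choose_one_right] at h2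
  have h3 : (∑ i ∈ Finset.range (n + 1), (n + 2).choose (i + 1 + 1)) = ∑ m ∈ Finset.range (n + 1), (n + 2).choose (m + 2) := rfl
  rw [h3] at h2
  unfold M₀
  rw [hB]
  omega

theorem moessner_col0_double (n : ℕ) : M₀ (n + 1) = M₀ n + M₀ n := by
  rw [M₀_eq, M₀_eq]
  ring
end

section
/- For all natural numbers k and n, M(k,n+1) = M(k,n)·(k+2), i.e. passing from level n to level n+1 in column k of Moessner's sieve multiplies the value by k+2. -/
def gAux : ℕ → ℕ → ℕ → ℕ → ℕ
  | 0, i, x, n => i * (n + 2) + x + 1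
  | m + 1, i, x, n =>
      (∑ a ∈ Finset.range (x + 1), gAux m i a n) +
        ∑ j ∈ Finset.range i, ∑ a ∈ Finset.range (n + 1 - m), gAux m j a n

def g (i m x n : ℕ) : ℕ := gAux m i x n

def Δ (i n : ℕ) : ℕ := ∑ m ∈ Finset.range (n + 1), ∑ x ∈ Finset.range (n + 1 - m), g i m x n

def M (k n : ℕ) : ℕ := (k + 1) * (n + 2) + 1 + ∑ i ∈ Finset.range (k + 1), Δ i n

/-! Each entry has the closed form `g i m x n = ∑_{s+t=m+1} C(n+2,s) i^s C(x+t,t)`. Summing over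
`x` is the hockey-stick identity, and a full row `m` collapses, through
`C(n+2,s) C(n+2-s,m+2-s) = C(n+2,m+2) C(m+2,s)`, to `C(n+2,m+2) ((i+1)^(m+2) - i^(m+2))`, which
telescopes over the columns `j < i`. The binomial theorem then gives
`Δ i n = (i+2)^(n+2) - (i+1)^(n+2) - (n+2)`, so `M k n = (k+2)^(n+2)`. -/

open Finset

lemma sum_range_add_choose_eq (N t : ℕ) :
    ∑ x ∈ range N, (x + t).choose t = (N + t).choose (t + 1) := by
  cases N with
  | zero => simp
  | succ N => rw [Nat.sum_range_add_choose, add_right_comm]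

lemma sum_range_choose_mul_pow_add_pow (p y : ℕ) :
    ∑ s ∈ range p, p.choose s * y ^ s + y ^ p = (y + 1) ^ p := by
  rw [add_pow, sum_range_succ]
  simp [mul_comm]

lemma sum_range_choose_add_two_mul_pow (p y : ℕ) :
    ∑ m ∈ range (p + 1), (p + 2).choose (m + 2) * y ^ (m + 2) + (p + 2) * y + 1
      = (y + 1) ^ (p + 2) := by
  rw [add_pow, sum_range_succ' _ (p + 2), sum_range_succ' _ (p + 1)]
  simp [mul_comm, add_assoc]

def gClosed (n i m x : ℕ) : ℕ :=
  ∑ p ∈ antidiagonal (m + 1), (n + 2).choose p.1 * i ^ p.1 * (x + p.2).choose p.2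

lemma sum_range_gClosed (n i m N : ℕ) :
    ∑ x ∈ range N, gClosed n i m x
      = ∑ p ∈ antidiagonal (m + 1),
          (n + 2).choose p.1 * i ^ p.1 * (N + p.2).choose (p.2 + 1) := by
  simp only [gClosed]
  rw [sum_comm]
  simp only [← mul_sum, sum_range_add_choose_eq]

lemma sum_range_gClosed_add_choose_mul_pow (n i m : ℕ) :
    ∑ x ∈ range (n + 1 - m), gClosed n i m x + (n + 2).choose (m + 2) * i ^ (m + 2)
      = (n + 2).choose (m + 2) * (i + 1) ^ (m + 2) := by
  rcases lt_or_ge n m with hnm | hmn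
  · simp [Nat.sub_eq_zero_of_le hnm, Nat.choose_eq_zero_of_lt (by omega : n + 2 < m + 2)]
  have hterm : ∀ s ∈ range (m + 2),
      (n + 2).choose s * i ^ s * (n + 1 - m + (m + 1 - s)).choose (m + 1 - s + 1)
        = (n + 2).choose (m + 2) * ((m + 2).choose s * i ^ s) := by
    intro s hs
    have hs : s ≤ m + 1 := Nat.lt_succ_iff.mp (mem_range.mp hs)
    rw [← mul_assoc, Nat.choose_mul (by omega),
      show n + 1 - m + (m + 1 - s) = n + 2 - s by omega, show m + 1 - s + 1 = m + 2 - s by omega]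
    ring
  rw [sum_range_gClosed, Nat.sum_antidiagonal_eq_sum_range_succ_mk, sum_congr rfl hterm,
    ← mul_sum, ← mul_add, sum_range_choose_mul_pow_add_pow]

lemma sum_range_sum_range_gClosed (n i m : ℕ) :
    ∑ j ∈ range i, ∑ x ∈ range (n + 1 - m), gClosed n j m x
      = (n + 2).choose (m + 2) * i ^ (m + 2) := by
  induction i with
  | zero => simp
  | succ i ih => rw [sum_range_succ, ih, add_comm, sum_range_gClosed_add_choose_mul_pow]

lemma gAux_eq_gClosed (m i x n : ℕ) : gAux m i x n = gClosed n i m x := by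
  induction m generalizing i x with
  | zero =>
    simp only [gAux, gClosed, Nat.sum_antidiagonal_succ, HasAntidiagonal.antidiagonal_zero,
      sum_singleton, Nat.choose_zero_right, Nat.choose_one_right, zero_add, add_zero, pow_zero,
      pow_one, one_mul, mul_one]
    ring
  | succ m ih =>
    simp only [gAux, ih]
    rw [sum_range_gClosed, sum_range_sum_range_gClosed, gClosed,
      Nat.sum_antidiagonal_succ' (n := m + 1), add_comm]
    congr 1
    · simp
    · refine sum_congr rfl fun p _ => ?_
      rw [add_right_comm x, add_assoc]

lemma Δ_add_add_pow (i n : ℕ) : Δ i n + (n + 2) + (i + 1) ^ (n + 2) = (i + 2) ^ (n + 2) := by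
  have hrows : Δ i n + ∑ m ∈ range (n + 1), (n + 2).choose (m + 2) * i ^ (m + 2)
      = ∑ m ∈ range (n + 1), (n + 2).choose (m + 2) * (i + 1) ^ (m + 2) := by
    simp only [Δ, g, gAux_eq_gClosed, ← sum_add_distrib, sum_range_gClosed_add_choose_mul_pow]
  have h₀ := sum_range_choose_add_two_mul_pow n i
  have h₁ : _ = (i + 2) ^ (n + 2) := sum_range_choose_add_two_mul_pow n (i + 1)
  linarith

lemma M_eq_pow (k n : ℕ) : M k n = (k + 2) ^ (n + 2) := by
  induction k with
  | zero => simpa [M, add_comm, add_left_comm] using Δ_add_add_pow 0 n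
  | succ k ih =>
    have hstep : M (k + 1) n = M k n + (n + 2) + Δ (k + 1) n := by
      simp only [M, sum_range_succ _ (k + 1)]
      ring
    rw [hstep, ih, ← Δ_add_add_pow (k + 1) n]
    ring

theorem moessner_level_step (k n : ℕ) : M k (n + 1) = M k n * (k + 2) := by
  rw [M_eq_pow, M_eq_pow]
  ring
end
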